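/- For every θ ∈ [0,1] and every integer ℓ ≥ 1, if R ~ Binomial(ℓ-1, θ), then E[D_B(θ ‖ (R+1)/(ℓ+1))] ≤ 4/ℓ. -/

import Mathlib

/-!
Bound the relative entropy by the χ²-divergence using `log x ≤ x - 1`, so that
`ln 2 · D_B(θ ‖ q) ≤ θ²/q + (1-θ)²/(1-q) - 1`. For `q = (R+1)/(n+2)` with `R ~ Bin(n, θ)`
the inverse moments `E[1/(R+1)]` and `E[1/(n+1-R)]` have closed forms, because
`(n+1) · C(n,k) / (k+1) = C(n+1,k+1)` turns them into truncated binomial expansions. This gives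
an expected χ²-divergence of at most `1/(n+1) = 1/ℓ`, and `1/ln 2 < 4`.
-/

/-- Binary relative entropy `D_B(p ‖ q)` (KL divergence between `Bernoulli p` and
`Bernoulli q`, in bits), with the convention `0 · log₂(0/q) = 0`. -/
noncomputable def binKL (p q : ℝ) : ℝ :=
  p * Real.logb 2 (p / q) + (1 - p) * Real.logb 2 ((1 - p) / (1 - q))

open Finset Real

lemma mul_log_div_le_sq_div_sub {p q : ℝ} (hp : 0 ≤ p) (hq : 0 < q) :
    p * log (p / q) ≤ p ^ 2 / q - p := by
  rcases hp.eq_or_lt with rfl | hp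
  · simp
  calc p * log (p / q) ≤ p * (p / q - 1) :=
        mul_le_mul_of_nonneg_left (log_le_sub_one_of_pos (div_pos hp hq)) hp.le
    _ = p ^ 2 / q - p := by ring

lemma binKL_le_chiSq {p q : ℝ} (hp₀ : 0 ≤ p) (hp₁ : p ≤ 1) (hq₀ : 0 < q) (hq₁ : q < 1) :
    binKL p q ≤ (p ^ 2 / q + (1 - p) ^ 2 / (1 - q) - 1) / log 2 := by
  have h₁ := mul_log_div_le_sq_div_sub hp₀ hq₀
  have h₂ := mul_log_div_le_sq_div_sub (sub_nonneg.2 hp₁) (sub_pos.2 hq₁)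
  rw [binKL, logb, logb, mul_div_assoc', mul_div_assoc', ← add_div]
  gcongr
  linarith

lemma sum_choose_mul_pow_mul_div_succ {K : Type*} [Field K] [CharZero K] (x y : K) (n : ℕ) :
    ∑ k ∈ range (n + 1), (n.choose k : K) * x ^ k * y ^ (n - k) * (x / (k + 1)) =
      ((x + y) ^ (n + 1) - y ^ (n + 1)) / (n + 1) := by
  have hterm : ∀ k ∈ range (n + 1), (n.choose k : K) * x ^ k * y ^ (n - k) * (x / (k + 1)) =
      x ^ (k + 1) * y ^ (n + 1 - (k + 1)) * ((n + 1).choose (k + 1) : K) / (n + 1) := by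
    intro k _
    have hchoose : ((n + 1 : ℕ) : K) * n.choose k = (n + 1).choose (k + 1) * (k + 1 : ℕ) := by
      exact_mod_cast Nat.add_one_mul_choose_eq n k
    push_cast at hchoose
    rw [Nat.add_sub_add_right]
    field_simp
    linear_combination x ^ (k + 1) * y ^ (n - k) * hchoose
  rw [sum_congr rfl hterm, ← sum_div, add_pow, sum_range_succ' _ (n + 1)]
  simp

lemma sum_choose_mul_pow_mul_div_sub {K : Type*} [Field K] [CharZero K] (x y : K) (n : ℕ) :
    ∑ k ∈ range (n + 1), (n.choose k : K) * x ^ k * y ^ (n - k) * (y / (n + 1 - k)) =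
      ((x + y) ^ (n + 1) - x ^ (n + 1)) / (n + 1) := by
  rw [add_comm x, ← sum_choose_mul_pow_mul_div_succ y x n, ← sum_range_reflect]
  refine sum_congr rfl fun k hk => ?_
  have hk : k ≤ n := Nat.lt_succ_iff.1 (mem_range.1 hk)
  rw [Nat.add_sub_cancel, Nat.sub_sub_self hk, Nat.choose_symm hk, Nat.cast_sub hk]
  ring_nf

lemma sum_binomial_chiSq_laplace_le {θ : ℝ} (hθ₀ : 0 ≤ θ) (hθ₁ : θ ≤ 1) (n : ℕ) :
    ∑ k ∈ range (n + 1), (n.choose k : ℝ) * θ ^ k * (1 - θ) ^ (n - k) *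
      (θ ^ 2 / ((k + 1) / (n + 2)) + (1 - θ) ^ 2 / (1 - (k + 1) / (n + 2)) - 1) ≤
      1 / ((n : ℝ) + 1) := by
  have hterm : ∀ k ∈ range (n + 1),
      (n.choose k : ℝ) * θ ^ k * (1 - θ) ^ (n - k) *
        (θ ^ 2 / ((k + 1) / (n + 2)) + (1 - θ) ^ 2 / (1 - (k + 1) / (n + 2)) - 1) =
      (n + 2) * θ * ((n.choose k : ℝ) * θ ^ k * (1 - θ) ^ (n - k) * (θ / (k + 1))) +
      (n + 2) * (1 - θ) *
        ((n.choose k : ℝ) * θ ^ k * (1 - θ) ^ (n - k) * ((1 - θ) / (n + 1 - k))) -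
      θ ^ k * (1 - θ) ^ (n - k) * n.choose k := by
    intro k hk
    have hk : (k : ℝ) < n + 1 := by exact_mod_cast mem_range.1 hk
    have hsub : (1 : ℝ) - (k + 1) / (n + 2) = (n + 1 - k) / (n + 2) := by
      field_simp; ring
    rw [hsub]
    field_simp [sub_ne_zero.2 hk.ne']
  rw [sum_congr rfl hterm, sum_sub_distrib, sum_add_distrib, ← mul_sum, ← mul_sum,
    sum_choose_mul_pow_mul_div_succ, sum_choose_mul_pow_mul_div_sub, ← add_pow]
  simp only [add_sub_cancel, one_pow]
  have hθ₁' := sub_nonneg.2 hθ₁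
  have h₁ : 0 ≤ θ * (1 - θ) ^ (n + 1) := by positivity
  have h₂ : 0 ≤ (1 - θ) * θ ^ (n + 1) := by positivity
  rw [← sub_nonneg]
  field_simp
  nlinarith

theorem stmt4 (θ : ℝ) (hθ : θ ∈ Set.Icc (0:ℝ) 1) (ℓ : ℕ) (hℓ : 1 ≤ ℓ) :
    ∑ k ∈ Finset.range ℓ,
      ((ℓ - 1).choose k : ℝ) * θ ^ k * (1 - θ) ^ (ℓ - 1 - k) *
        binKL θ (((k : ℝ) + 1) / ((ℓ : ℝ) + 1))
      ≤ 4 / (ℓ : ℝ) := by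
  obtain ⟨hθ₀, hθ₁⟩ := hθ
  obtain ⟨n, rfl⟩ := Nat.exists_eq_add_of_le' hℓ
  have hθ₁' := sub_nonneg.2 hθ₁
  push_cast
  rw [show (n : ℝ) + 1 + 1 = n + 2 by ring]
  calc _ ≤ ∑ k ∈ range (n + 1), (n.choose k : ℝ) * θ ^ k * (1 - θ) ^ (n - k) *
        ((θ ^ 2 / ((k + 1) / (n + 2)) + (1 - θ) ^ 2 / (1 - (k + 1) / (n + 2)) - 1) / log 2) := by
        refine sum_le_sum fun k hk => mul_le_mul_of_nonneg_left ?_ (by positivity)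
        have hk : (k : ℝ) < n + 1 := by exact_mod_cast mem_range.1 hk
        exact binKL_le_chiSq hθ₀ hθ₁ (by positivity) ((div_lt_one (by positivity)).2 (by linarith))
    _ ≤ 1 / (n + 1) / log 2 := by
        simp only [mul_div_assoc', ← sum_div]
        gcongr
        exact sum_binomial_chiSq_laplace_le hθ₀ hθ₁ n
    _ ≤ 4 / (n + 1) := by
        rw [div_div, div_le_div_iff₀ (by positivity) (by positivity)]
        nlinarith [log_two_gt_d9]
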